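/- Let q ≥ 1, Γ ∈ 𝓕_i(a_1,…,a_q; b_1,…,b_q), and suppose a_q − 1 is not a source of Γ. Let L_3(Γ) be the graph obtained from Γ by replacing its unique edge of the form (a_q, t) by (a_q − 1, t). Then L_3(Γ) is a flow if and only if a_q − 1 is not a transit point of Γ; and if L_3(Γ) is a flow, then L_3(Γ) ∈ 𝓕_i(a_1,…,a_{q−1}, a_q − 1; b_1,…,b_q) and sgn_i(L_3(Γ)) = sgn_i(Γ). -/

import Mathlib

open Finset

/-- A "flow graph" is a finite set of directed edges with integer vertices. -/
abbrev FlowGraph : Type := Finset (ℤ × ℤ)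

/-- The edges of `E` beginning at `r`. -/
def beginsAt (E : FlowGraph) (r : ℤ) : Finset (ℤ × ℤ) := E.filter (fun e => e.1 = r)

/-- The edges of `E` ending at `r`. -/
def endsAt (E : FlowGraph) (r : ℤ) : Finset (ℤ × ℤ) := E.filter (fun e => e.2 = r)

/-- `E` is a flow with set of sources `A` and set of sinks `B`:
every edge `(s,t)` has `s < t`; the sources and sinks are pairwise distinct;
exactly one edge begins at each source (and none ends there); exactly one edge
ends at each sink (and none begins there); and every other vertex either meets
no edge, or exactly one edge ends at it and exactly one edge begins at it
(such a vertex is a transit point). -/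
structure IsFlow (E : FlowGraph) (A B : Finset ℤ) : Prop where
  edge_lt : ∀ e ∈ E, e.1 < e.2
  disjAB : Disjoint A B
  source_out : ∀ a ∈ A, (beginsAt E a).card = 1
  source_in : ∀ a ∈ A, endsAt E a = ∅
  sink_in : ∀ b ∈ B, (endsAt E b).card = 1
  sink_out : ∀ b ∈ B, beginsAt E b = ∅
  transit : ∀ r : ℤ, r ∉ A → r ∉ B →
      (beginsAt E r = ∅ ∧ endsAt E r = ∅) ∨
      ((beginsAt E r).card = 1 ∧ (endsAt E r).card = 1)

/-- The set of transit points of the flow `E` with sources `A` and sinks `B`: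
the vertices meeting some edge which are neither sources nor sinks. -/
def transitSet (E : FlowGraph) (A B : Finset ℤ) : Finset ℤ :=
  ((E.image Prod.fst) ∪ (E.image Prod.snd)) \ (A ∪ B)

def IsTransitPoint (E : FlowGraph) (A B : Finset ℤ) (r : ℤ) : Prop :=
  r ∈ transitSet E A B

/-- Two vertices are linked if they lie in the same connected component of `E`. -/
def Linked (E : FlowGraph) (x y : ℤ) : Prop :=
  Relation.ReflTransGen (fun u v => (u, v) ∈ E ∨ (v, u) ∈ E) x y

/-- The finset of values of a family of integers. -/
def srcSet {q : ℕ} (a : Fin q → ℤ) : Finset ℤ := Finset.image a Finset.univ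

/-- Membership in `𝓕_i(a_1,…,a_q; b_1,…,b_q)` : a flow with sources the `a j`,
sinks the `b j`, and no transit point greater than `i`. -/
def InF {q : ℕ} (i : ℤ) (a b : Fin q → ℤ) (E : FlowGraph) : Prop :=
  IsFlow E (srcSet a) (srcSet b) ∧
  ∀ r : ℤ, IsTransitPoint E (srcSet a) (srcSet b) r → r ≤ i

/-- `σ` is the linking permutation: the source `a j` is linked to the sink `b (σ j)`. -/
def IsLinkingPerm {q : ℕ} (E : FlowGraph) (a b : Fin q → ℤ) (σ : Equiv.Perm (Fin q)) : Prop :=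
  ∀ j : Fin q, Linked E (a j) (b (σ j))

/-- The `i`-sign of a flow `E` (with sources `A`, sinks given by the family `b` and
sinks-set `B`), computed from a linking permutation `σ`:
`sgn σ * (-1) ^ (Σ_j (b_j - i) + #transit points)`. -/
def signValue {q : ℕ} (i : ℤ) (b : Fin q → ℤ) (σ : Equiv.Perm (Fin q))
    (E : FlowGraph) (A B : Finset ℤ) : ℤ :=
  (Equiv.Perm.sign σ : ℤ) *
    (-1) ^ ((∑ j : Fin q, (b j - i)).toNat + (transitSet E A B).card)

/-- A graph is a flow if it is a flow for some choice of sources and sinks. -/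
def IsFlowGraph (E : FlowGraph) : Prop := ∃ A B : Finset ℤ, IsFlow E A B

/-! When `a_q - 1` is not a transit point it meets no edge of `Γ`, and `L_3(Γ)` is the image
of `Γ` under the transposition of `a_q` and `a_q - 1`, which keeps every edge increasing.
Relabelling vertices transports flows, transit sets and linking; this transposition fixes the
sinks and every transit point, so `L_3(Γ)` is a flow with the same transit points and the same
linking permutation, hence the same `i`-sign. When `a_q - 1` is a transit point, an edge of `Γ`
already starts there, and in `L_3(Γ)` two edges would. -/

@[simp]
lemma mem_beginsAt {E : FlowGraph} {r : ℤ} {e : ℤ × ℤ} :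
    e ∈ beginsAt E r ↔ e ∈ E ∧ e.1 = r := mem_filter

@[simp]
lemma mem_endsAt {E : FlowGraph} {r : ℤ} {e : ℤ × ℤ} :
    e ∈ endsAt E r ↔ e ∈ E ∧ e.2 = r := mem_filter

lemma mem_transitSet {E : FlowGraph} {A B : Finset ℤ} {r : ℤ} :
    r ∈ transitSet E A B ↔ (∃ e ∈ E, e.1 = r ∨ e.2 = r) ∧ r ∉ A ∧ r ∉ B := by
  simp only [transitSet, mem_sdiff, mem_union, mem_image, not_or]
  constructor
  · rintro ⟨⟨e, he, hr⟩ | ⟨e, he, hr⟩, hAB⟩ <;> exact ⟨⟨e, he, by tauto⟩, hAB⟩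
  · rintro ⟨⟨e, he, hr | hr⟩, hAB⟩
    exacts [⟨.inl ⟨e, he, hr⟩, hAB⟩, ⟨.inr ⟨e, he, hr⟩, hAB⟩]

lemma Linked.symm {E : FlowGraph} {x y : ℤ} (h : Linked E x y) : Linked E y x := by
  induction h with
  | refl => exact .refl
  | tail _ hcd ih => exact ih.head hcd.symm

namespace IsFlow

variable {E : FlowGraph} {A B : Finset ℤ}

lemma card_beginsAt_le_one (h : IsFlow E A B) (r : ℤ) : (beginsAt E r).card ≤ 1 := by
  by_cases hA : r ∈ A
  · exact (h.source_out r hA).le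
  by_cases hB : r ∈ B
  · simp [h.sink_out r hB]
  · rcases h.transit r hA hB with ⟨h1, -⟩ | ⟨h1, -⟩ <;> simp [h1]

lemma card_endsAt_le_one (h : IsFlow E A B) (r : ℤ) : (endsAt E r).card ≤ 1 := by
  by_cases hA : r ∈ A
  · simp [h.source_in r hA]
  by_cases hB : r ∈ B
  · exact (h.sink_in r hB).le
  · rcases h.transit r hA hB with ⟨-, h2⟩ | ⟨-, h2⟩ <;> simp [h2]

lemma eq_of_fst_eq (h : IsFlow E A B) {e₁ e₂ : ℤ × ℤ} (h₁ : e₁ ∈ E) (h₂ : e₂ ∈ E)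
    (h12 : e₁.1 = e₂.1) : e₁ = e₂ :=
  card_le_one.mp (h.card_beginsAt_le_one e₂.1) e₁ (by simp [h₁, h12]) e₂ (by simp [h₂])

lemma eq_of_snd_eq (h : IsFlow E A B) {e₁ e₂ : ℤ × ℤ} (h₁ : e₁ ∈ E) (h₂ : e₂ ∈ E)
    (h12 : e₁.2 = e₂.2) : e₁ = e₂ :=
  card_le_one.mp (h.card_endsAt_le_one e₂.2) e₁ (by simp [h₁, h12]) e₂ (by simp [h₂])

lemma snd_ne_of_mem_source (h : IsFlow E A B) {a : ℤ} (ha : a ∈ A) {e : ℤ × ℤ} (he : e ∈ E) :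
    e.2 ≠ a := fun hea => by
  simpa [he, hea] using congrArg (e ∈ ·) (h.source_in a ha)

lemma exists_fst_eq_of_mem_transitSet (h : IsFlow E A B) {r : ℤ}
    (hr : r ∈ transitSet E A B) : ∃ s, (r, s) ∈ E := by
  obtain ⟨⟨e, he, hre⟩, hA, hB⟩ := mem_transitSet.mp hr
  rcases h.transit r hA hB with ⟨h1, h2⟩ | ⟨h1, -⟩
  · rcases hre with hre | hre
    · simpa [he, hre] using congrArg (e ∈ ·) h1
    · simpa [he, hre] using congrArg (e ∈ ·) h2
  · obtain ⟨e', he'⟩ := card_pos.mp (h1 ▸ Nat.one_pos)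
    obtain ⟨he'E, rfl⟩ := mem_beginsAt.mp he'
    exact ⟨e'.2, he'E⟩

/-- In a flow every vertex has in- and out-degree at most one, so an undirected path
between two vertices is a directed path in one of the two directions. -/
lemma reflTransGen_of_linked (h : IsFlow E A B) {x y : ℤ} (hxy : Linked E x y) :
    Relation.ReflTransGen (fun u v => (u, v) ∈ E) x y ∨
      Relation.ReflTransGen (fun u v => (u, v) ∈ E) y x := by
  induction hxy with
  | refl => exact .inl .refl
  | @tail c d _ hcd ih =>
    rcases hcd with hcd | hdc
    · rcases ih with ih | ih
      · exact .inl (ih.tail hcd)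
      · rcases ih.cases_head with rfl | ⟨e, hce, hey⟩
        · exact .inl (.single hcd)
        · obtain rfl : e = d := congrArg Prod.snd (h.eq_of_fst_eq hce hcd rfl)
          exact .inr hey
    · rcases ih with ih | ih
      · rcases ih.cases_tail with rfl | ⟨e, hxe, hec⟩
        · exact .inr (.single hdc)
        · obtain rfl : e = d := congrArg Prod.fst (h.eq_of_snd_eq hec hdc rfl)
          exact .inl hxe
      · exact .inr (ih.head hdc)

lemma eq_of_linked_of_mem_sink (h : IsFlow E A B) {x y : ℤ} (hx : x ∈ B) (hy : y ∈ B)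
    (hxy : Linked E x y) : x = y := by
  have no_out : ∀ b ∈ B, ∀ c, (b, c) ∉ E := fun b hb c hbc => by
    simpa [hbc] using congrArg ((b, c) ∈ ·) (h.sink_out b hb)
  rcases h.reflTransGen_of_linked hxy with hr | hr <;> rcases hr.cases_head with h' | ⟨c, hc, -⟩
  exacts [h', (no_out x hx c hc).elim, h'.symm, (no_out y hy c hc).elim]

end IsFlow

lemma IsLinkingPerm.eq {q : ℕ} {E : FlowGraph} {A : Finset ℤ} {a b : Fin q → ℤ}
    (hE : IsFlow E A (srcSet b)) (hb : b.Injective) {σ τ : Equiv.Perm (Fin q)}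
    (hσ : IsLinkingPerm E a b σ) (hτ : IsLinkingPerm E a b τ) : σ = τ :=
  Equiv.ext fun j => hb <| hE.eq_of_linked_of_mem_sink (by simp [srcSet]) (by simp [srcSet])
    ((hσ j).symm.trans (hτ j))

def FlowGraph.relabel (f : ℤ ≃ ℤ) (E : FlowGraph) : FlowGraph :=
  E.map (f.prodCongr f).toEmbedding

namespace FlowGraph

variable (f : ℤ ≃ ℤ) {E : FlowGraph}

@[simp]
lemma mem_relabel {e : ℤ × ℤ} : e ∈ E.relabel f ↔ (f.symm e.1, f.symm e.2) ∈ E :=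
  mem_map_equiv

lemma beginsAt_relabel (r : ℤ) :
    beginsAt (E.relabel f) (f r) = (beginsAt E r).map (f.prodCongr f).toEmbedding := by
  simp [beginsAt, relabel, filter_map]

lemma endsAt_relabel (r : ℤ) :
    endsAt (E.relabel f) (f r) = (endsAt E r).map (f.prodCongr f).toEmbedding := by
  simp [endsAt, relabel, filter_map]

lemma transitSet_relabel (A B : Finset ℤ) :
    transitSet (E.relabel f) (A.map f.toEmbedding) (B.map f.toEmbedding) =
      (transitSet E A B).map f.toEmbedding := by
  simp only [transitSet, Finset.map_sdiff, Finset.map_union]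
  congr 2 <;> ext <;> simp only [relabel, mem_image, mem_map_equiv, Prod.exists] <;>
    exact ⟨fun ⟨_, _, hx, h⟩ => ⟨_, _, hx, by simp [← h]⟩,
      fun ⟨u, v, hx, h⟩ => ⟨f u, f v, by simpa using hx, by simp [h]⟩⟩

end FlowGraph

lemma Linked.relabel {E : FlowGraph} {x y : ℤ} (h : Linked E x y) (f : ℤ ≃ ℤ) :
    Linked (E.relabel f) (f x) (f y) :=
  Relation.ReflTransGen.lift f (fun u v huv => by simpa [Function.onFun] using huv) x y h

lemma IsFlow.relabel {E : FlowGraph} {A B : Finset ℤ} (h : IsFlow E A B) (f : ℤ ≃ ℤ)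
    (hlt : ∀ e ∈ E.relabel f, e.1 < e.2) :
    IsFlow (E.relabel f) (A.map f.toEmbedding) (B.map f.toEmbedding) where
  edge_lt := hlt
  disjAB := by simpa using h.disjAB
  source_out := by
    simp only [forall_mem_map]
    simpa [FlowGraph.beginsAt_relabel] using h.source_out
  source_in := by
    simp only [forall_mem_map]
    simpa [FlowGraph.endsAt_relabel] using h.source_in
  sink_in := by
    simp only [forall_mem_map]
    simpa [FlowGraph.endsAt_relabel] using h.sink_in
  sink_out := by
    simp only [forall_mem_map]
    simpa [FlowGraph.beginsAt_relabel] using h.sink_out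
  transit r := by
    obtain ⟨r, rfl⟩ := f.surjective r
    simpa [FlowGraph.beginsAt_relabel, FlowGraph.endsAt_relabel] using h.transit r

lemma srcSet_comp {q : ℕ} (f : ℤ ≃ ℤ) (a : Fin q → ℤ) :
    srcSet (f ∘ a) = (srcSet a).map f.toEmbedding := by
  simp [srcSet, map_eq_image, image_image]

lemma IsLinkingPerm.relabel {q : ℕ} {E : FlowGraph} {a b : Fin q → ℤ} {σ : Equiv.Perm (Fin q)}
    (h : IsLinkingPerm E a b σ) (f : ℤ ≃ ℤ) : IsLinkingPerm (E.relabel f) (f ∘ a) (f ∘ b) σ :=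
  fun j => Linked.relabel (h j) f

lemma Finset.map_swap_eq_self {α : Type*} [DecidableEq α] {s : Finset α} {x y : α}
    (hx : x ∉ s) (hy : y ∉ s) : s.map (Equiv.swap x y).toEmbedding = s := by
  ext r
  rw [mem_map_equiv, Equiv.symm_swap, Equiv.swap_apply_def]
  split_ifs <;> simp_all

lemma Equiv.swap_comp_eq_update {ι α : Type*} [DecidableEq ι] [DecidableEq α] {a : ι → α}
    (ha : a.Injective) (j₀ : ι) {y : α} (hy : ∀ j, a j ≠ y) :
    Equiv.swap (a j₀) y ∘ a = Function.update a j₀ y := by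
  ext j
  rcases eq_or_ne j j₀ with rfl | hj
  · simp
  · simp [hj, Equiv.swap_apply_of_ne_of_ne (ha.ne hj) (hy j)]

lemma forall_ne_of_notMem_transitSet {E : FlowGraph} {A B : Finset ℤ} {r : ℤ}
    (hr : r ∉ transitSet E A B) (hA : r ∉ A) (hB : r ∉ B) : ∀ e ∈ E, e.1 ≠ r ∧ e.2 ≠ r := by
  simpa [mem_transitSet, hA, hB, not_or] using hr

namespace IsFlow

variable {E : FlowGraph} {A B : Finset ℤ} {x y t : ℤ}

lemma relabel_swap_eq (h : IsFlow E A B) (hx : x ∈ A) (hxt : (x, t) ∈ E)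
    (hy : ∀ e ∈ E, e.1 ≠ y ∧ e.2 ≠ y) :
    E.relabel (Equiv.swap x y) = insert (y, t) (E.erase (x, t)) := by
  have out_x : ∀ e ∈ E, e.1 = x → e = (x, t) := fun e he hex => h.eq_of_fst_eq he hxt hex
  have in_x : ∀ e ∈ E, e.2 ≠ x := fun e he => h.snd_ne_of_mem_source hx he
  ext ⟨u, v⟩
  simp only [FlowGraph.mem_relabel, Equiv.symm_swap, mem_insert, mem_erase, Prod.mk.injEq,
    Equiv.swap_apply_def]
  -- `swap x y` moves only `x` and `y`, and the only edge meeting either of them is `(x, t)`.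
  grind

lemma map_swap_sinks_eq (h : IsFlow E A B) (hx : x ∈ A) (hy : ∀ e ∈ E, e.1 ≠ y ∧ e.2 ≠ y) :
    B.map (Equiv.swap x y).toEmbedding = B := by
  refine map_swap_eq_self (disjoint_left.mp h.disjAB hx) fun hyB => ?_
  obtain ⟨e, he⟩ := card_eq_one.mp (h.sink_in y hyB)
  obtain ⟨heE, hey⟩ := mem_endsAt.mp (he ▸ mem_singleton_self e)
  exact (hy e heE).2 hey

lemma moveSource (h : IsFlow E A B) (hx : x ∈ A) (hxt : (x, t) ∈ E)
    (hy : ∀ e ∈ E, e.1 ≠ y ∧ e.2 ≠ y) (hyt : y < t) :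
    IsFlow (insert (y, t) (E.erase (x, t))) (A.map (Equiv.swap x y).toEmbedding) B := by
  rw [← h.relabel_swap_eq hx hxt hy, ← h.map_swap_sinks_eq hx hy]
  refine h.relabel _ fun e he => ?_
  rcases mem_insert.mp (h.relabel_swap_eq hx hxt hy ▸ he) with rfl | he
  · exact hyt
  · exact h.edge_lt e (mem_of_mem_erase he)

lemma transitSet_moveSource (h : IsFlow E A B) (hx : x ∈ A) (hxt : (x, t) ∈ E)
    (hy : ∀ e ∈ E, e.1 ≠ y ∧ e.2 ≠ y) :
    transitSet (insert (y, t) (E.erase (x, t))) (A.map (Equiv.swap x y).toEmbedding) B =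
      transitSet E A B := by
  have hxT : x ∉ transitSet E A B := fun hxT => (mem_transitSet.mp hxT).2.1 hx
  have hyT : y ∉ transitSet E A B := fun hyT => by
    obtain ⟨e, he, hey⟩ := (mem_transitSet.mp hyT).1
    exact hey.elim (hy e he).1 (hy e he).2
  have := FlowGraph.transitSet_relabel (Equiv.swap x y) A B (E := E)
  rwa [h.relabel_swap_eq hx hxt hy, h.map_swap_sinks_eq hx hy, map_swap_eq_self hxT hyT] at this

lemma isLinkingPerm_moveSource {q : ℕ} {a b : Fin q → ℤ} {σ : Equiv.Perm (Fin q)}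
    (h : IsFlow E A B) (hx : x ∈ A) (hxt : (x, t) ∈ E) (hy : ∀ e ∈ E, e.1 ≠ y ∧ e.2 ≠ y)
    (hσ : IsLinkingPerm E a b σ) :
    IsLinkingPerm (insert (y, t) (E.erase (x, t))) (Equiv.swap x y ∘ a) (Equiv.swap x y ∘ b) σ :=
  h.relabel_swap_eq hx hxt hy ▸ hσ.relabel _

lemma not_isFlowGraph_of_mem_transitSet (h : IsFlow E A B) (hxt : (x, t) ∈ E) (hxy : x ≠ y)
    (hy : y ∈ transitSet E A B) : ¬ IsFlowGraph (insert (y, t) (E.erase (x, t))) := by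
  rintro ⟨A', B', h'⟩
  obtain ⟨s, hys⟩ := h.exists_fst_eq_of_mem_transitSet hy
  have hyt : (y, t) ∉ E := fun hyt => hxy (congrArg Prod.fst (h.eq_of_snd_eq hxt hyt rfl))
  have hts : (y, t) = (y, s) :=
    h'.eq_of_fst_eq (mem_insert_self _ _) (mem_insert_of_mem (by simp [hys, hxy.symm])) rfl
  exact hyt (hts ▸ hys)

end IsFlow

/-- Lemma 14 (first part): let `Γ ∈ 𝓕_i(a_1,…,a_q; b_1,…,b_q)` and suppose
`a_q - 1` is not a source of `Γ`; let `L_3(Γ)` replace the edge `(a_q, t)` by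
`(a_q - 1, t)`. Then `L_3(Γ)` is a flow iff `a_q - 1` is not a transit point of
`Γ`, and in that case it belongs to `𝓕_i(a_1,…,a_{q-1}, a_q - 1; b_1,…,b_q)`
and has the same `i`-sign as `Γ`. -/
theorem statement3 {q : ℕ} (i : ℤ) (a b : Fin (q + 1) → ℤ)
    (ha : StrictMono a) (hb : StrictAnti b)
    (hai : ∀ j, a j ≤ i) (hbi : ∀ j, i < b j)
    (E : FlowGraph) (hE : InF i a b E)
    (hns : ∀ j, a j ≠ a (Fin.last q) - 1)
    (t : ℤ) (ht : (a (Fin.last q), t) ∈ E) :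
    (IsFlowGraph (insert (a (Fin.last q) - 1, t) (E.erase (a (Fin.last q), t)))
      ↔ ¬ IsTransitPoint E (srcSet a) (srcSet b) (a (Fin.last q) - 1)) ∧
    (¬ IsTransitPoint E (srcSet a) (srcSet b) (a (Fin.last q) - 1) →
      InF i (Function.update a (Fin.last q) (a (Fin.last q) - 1)) b
        (insert (a (Fin.last q) - 1, t) (E.erase (a (Fin.last q), t))) ∧
      ∀ σ τ : Equiv.Perm (Fin (q + 1)),
        IsLinkingPerm E a b σ →
        IsLinkingPerm (insert (a (Fin.last q) - 1, t) (E.erase (a (Fin.last q), t)))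
          (Function.update a (Fin.last q) (a (Fin.last q) - 1)) b τ →
        signValue i b τ (insert (a (Fin.last q) - 1, t) (E.erase (a (Fin.last q), t)))
            (srcSet (Function.update a (Fin.last q) (a (Fin.last q) - 1))) (srcSet b)
          = signValue i b σ E (srcSet a) (srcSet b)) := by
  obtain ⟨hF, hT⟩ := hE
  set m := a (Fin.last q)
  have hmA : m ∈ srcSet a := mem_image_of_mem a (mem_univ _)
  have hm'A : m - 1 ∉ srcSet a := by simpa [srcSet] using hns
  have hmb : ∀ j, m < b j := fun j => (hai _).trans_lt (hbi j)
  have hm'B : m - 1 ∉ srcSet b := by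
    simpa [srcSet] using fun j => ((hmb j).trans' (sub_one_lt m)).ne'
  have hmt : m - 1 < t := (sub_one_lt m).trans (hF.edge_lt _ ht)
  have hfa := Equiv.swap_comp_eq_update ha.injective (Fin.last q) hns
  have hfb : Equiv.swap m (m - 1) ∘ b = b :=
    funext fun j => Equiv.swap_apply_of_ne_of_ne (hmb j).ne' ((hmb j).trans' (sub_one_lt m)).ne'
  have hA' : srcSet (Function.update a (Fin.last q) (m - 1)) =
      (srcSet a).map (Equiv.swap m (m - 1)).toEmbedding := by
    rw [← hfa, srcSet_comp]
  have hy (hnt : ¬ IsTransitPoint E (srcSet a) (srcSet b) (m - 1)) :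
      ∀ e ∈ E, e.1 ≠ m - 1 ∧ e.2 ≠ m - 1 :=
    forall_ne_of_notMem_transitSet hnt hm'A hm'B
  have hflow (hnt : ¬ IsTransitPoint E (srcSet a) (srcSet b) (m - 1)) :
      IsFlow (insert (m - 1, t) (E.erase (m, t)))
        (srcSet (Function.update a (Fin.last q) (m - 1))) (srcSet b) :=
    hA' ▸ hF.moveSource hmA ht (hy hnt) hmt
  refine ⟨⟨fun hE' hnt => hF.not_isFlowGraph_of_mem_transitSet ht (sub_one_lt m).ne' hnt hE',
    fun hnt => ⟨_, _, hflow hnt⟩⟩, fun hnt => ?_⟩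
  have htrans := hA' ▸ hF.transitSet_moveSource hmA ht (hy hnt)
  refine ⟨⟨hflow hnt, fun r hr => hT r (htrans.subset hr)⟩, fun σ τ hσ hτ => ?_⟩
  have hστ : σ = τ := by
    have hσ' := hF.isLinkingPerm_moveSource hmA ht (hy hnt) hσ
    rw [hfa, hfb] at hσ'
    exact hσ'.eq (hflow hnt) hb.injective hτ
  simp only [signValue, htrans, hστ]
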